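/- arXiv:2502.03243 — 2 statements merged into one kernel-verified Lean document; each statement's English description precedes it below -/
import Mathlib

section
/- For coprime integers 0 < a < q, the fraction a/q belongs to the SL(2,ℕ)-saturated Farey set 𝔖𝔉_Q (i.e., there exists a matrix (a' b'; c' d') in SL(2,ℤ) with positive entries, a' ≥ max{b', c'}, b' ≥ d', c' ≥ d', trace a' + d' ≤ Q, and d'/b' = a/q) if and only if q + a + ā ≤ Q, where ā is the multiplicative inverse of a mod q in [1, q). -/
/-!
Write `M = (a' b'; c' d')`. The determinant makes `d'/b'` a reduced fraction, so `d'/b' = a/q`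
forces `d' = a` and `b' = q`. The determinant then reads `a' a ≡ 1 (mod q)`, so `a' ≡ ā`, and
`a' ≥ b' = q > ā` gives `a' ≥ q + ā`. Conversely, with `a ā = 1 + q m` the matrix
`(q + ā, q; a + m, a)` lies in `S` and has trace exactly `q + a + ā`.
-/

lemma Int.eq_and_eq_of_mul_eq_mul_of_isCoprime {a b c d : ℤ} (hab : IsCoprime a b)
    (hcd : IsCoprime c d) (hb : 0 < b) (hd : 0 < d) (h : a * d = c * b) : a = c ∧ b = d := by
  have hbd : b ∣ d := hab.symm.dvd_of_dvd_mul_left ⟨c, by rw [h, mul_comm]⟩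
  have hdb : d ∣ b := hcd.symm.dvd_of_dvd_mul_left ⟨a, by rw [← h, mul_comm]⟩
  have hb_eq : b = d := Int.dvd_antisymm hb.le hd.le hbd hdb
  subst hb_eq
  exact ⟨mul_right_cancel₀ hb.ne' h, rfl⟩

lemma Int.ModEq.of_mul_left_modEq_one {n a x y : ℤ} (hx : a * x ≡ 1 [ZMOD n])
    (hy : a * y ≡ 1 [ZMOD n]) : x ≡ y [ZMOD n] :=
  calc x = x * 1 := (mul_one x).symm
    _ ≡ x * (a * y) [ZMOD n] := hy.symm.mul_left x
    _ = (a * x) * y := by ring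
    _ ≡ 1 * y [ZMOD n] := hx.mul_right y
    _ = y := one_mul y

lemma Int.add_le_of_modEq_of_lt {n r x : ℤ} (h : r ≡ x [ZMOD n]) (hrx : r < x) : r + n ≤ x := by
  have := Int.le_of_dvd (sub_pos.mpr hrx) (Int.modEq_iff_dvd.mp h)
  omega

section SaturatedFarey

variable {a q ab : ℤ}

lemma add_add_inv_le_trace {a' b' c' d' : ℤ} (hdet : a' * d' - b' * c' = 1) (hb' : 0 < b')
    (hba : b' ≤ a') (haq : IsCoprime a q) (hq : 0 < q) (hab : ab < q)
    (hinv : a * ab ≡ 1 [ZMOD q]) (hfrac : d' * q = a * b') : q + a + ab ≤ a' + d' := by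
  have hdb : IsCoprime d' b' := ⟨a', -c', by linarith⟩
  obtain ⟨rfl, rfl⟩ := Int.eq_and_eq_of_mul_eq_mul_of_isCoprime haq hdb hq hb' hfrac.symm
  have hinv' : a * a' ≡ 1 [ZMOD q] := Int.modEq_iff_dvd.mpr ⟨-c', by linarith⟩
  have hle := Int.add_le_of_modEq_of_lt (Int.ModEq.of_mul_left_modEq_one hinv hinv') (by omega)
  omega

lemma exists_mem_saturatedFarey {Q : ℤ} (ha : 0 < a) (haq : a < q) (hab : 1 ≤ ab)
    (hinv : a * ab ≡ 1 [ZMOD q]) (hQ : q + a + ab ≤ Q) :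
    ∃ a' b' c' d' : ℤ,
      a' * d' - b' * c' = 1 ∧
      0 < a' ∧ 0 < b' ∧ 0 < c' ∧ 0 < d' ∧
      b' ≤ a' ∧ c' ≤ a' ∧ d' ≤ b' ∧ d' ≤ c' ∧
      a' + d' ≤ Q ∧ d' * q = a * b' := by
  obtain ⟨m, hm⟩ := Int.modEq_iff_dvd.mp hinv.symm
  have hm0 : 0 ≤ m := by nlinarith
  have hmab : m < ab := by nlinarith
  exact ⟨q + ab, q, a + m, a, by linarith, by omega, by omega, by omega, ha,
    by omega, by omega, haq.le, by omega, by omega, by ring⟩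

end SaturatedFarey

theorem stmt_7 (Q a q ab : ℤ)
    (ha : 0 < a) (haq : a < q) (hgcd : Int.gcd a q = 1)
    (hi1 : 1 ≤ ab) (hi2 : ab < q) (hinv : a * ab ≡ 1 [ZMOD q]) :
    (∃ a' b' c' d' : ℤ,
      a' * d' - b' * c' = 1 ∧
      0 < a' ∧ 0 < b' ∧ 0 < c' ∧ 0 < d' ∧
      b' ≤ a' ∧ c' ≤ a' ∧ d' ≤ b' ∧ d' ≤ c' ∧
      a' + d' ≤ Q ∧ d' * q = a * b') ↔ q + a + ab ≤ Q := by
  refine ⟨?_, exists_mem_saturatedFarey ha haq hi1 hinv⟩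
  rintro ⟨a', b', c', d', hdet, -, hb', -, -, hba, -, -, -, htr, hfrac⟩
  have := add_add_inv_le_trace hdet hb' hba (Int.isCoprime_iff_gcd_eq_one.mpr hgcd)
    (ha.trans haq) hi2 hinv hfrac
  omega
end

section
/- Let a₁/q₁ < a₂/q₂ be consecutive Farey fractions of order Q with q₁ < q₂ and ⌊(Q+q₁)/q₂⌋ = 2. Set q₃ = 2q₂ − q₁ and a₃ = 2a₂ − a₁. Then it is impossible that both h(a₁/q₁) ≤ Q and h(a₃/q₃) ≤ Q hold. -/
/-- `a₁/q₁ < a₂/q₂` are consecutive elements of the Farey sequence of order `Q`. -/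
def FareyConsec (Q a₁ q₁ a₂ q₂ : ℤ) : Prop :=
  0 < q₁ ∧ q₁ ≤ Q ∧ 0 < q₂ ∧ q₂ ≤ Q ∧ 0 ≤ a₁ ∧ a₁ ≤ q₁ ∧ 0 ≤ a₂ ∧ a₂ ≤ q₂ ∧
  Int.gcd a₁ q₁ = 1 ∧ Int.gcd a₂ q₂ = 1 ∧ (a₁ : ℚ) / q₁ < (a₂ : ℚ) / q₂ ∧
  ∀ c d : ℤ, 0 < d → d ≤ Q → ¬((a₁ : ℚ) / q₁ < (c : ℚ) / d ∧ (c : ℚ) / d < (a₂ : ℚ) / q₂)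

/-! The key fact is the unimodularity `a₂ q₁ - a₁ q₂ = 1` of Farey neighbours. It comes from the
fraction `c/d` with `c q₁ - a₁ d = 1` and `Q - q₁ < d ≤ Q`: it lies right of `a₁/q₁`, hence not
left of `a₂/q₂`, and writing `(a₂, q₂)` in the basis `(a₁, q₁), (c, d)` leaves no room for
`a₂ q₁ - a₁ q₂ ≥ 2`.
Applied to the pair `a₂/q₂, a₃/q₃` it gives `a₃ q₂ - a₂ q₃ = 1`, so `q₂` is the inverse of `a₃`
modulo `q₃` and `h(a₃/q₃) = q₃ + a₃ + q₂ = 3 q₂ - q₁ + 2 a₂ - a₁`. Since `Q < 3 q₂ - q₁` by the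
floor condition, `h(a₃/q₃) ≤ Q` would force `2 a₂ < a₁`, whereas `a₁ < a₂` because `q₁ < q₂`. -/

lemma Int.exists_mul_sub_mul_eq_one_of_gcd_eq_one {a q : ℤ} (hq : 0 < q) (h : Int.gcd a q = 1)
    (Q : ℤ) : ∃ c d, Q - q < d ∧ d ≤ Q ∧ c * q - a * d = 1 := by
  obtain ⟨u, v, huv⟩ := Int.isCoprime_iff_gcd_eq_one.mpr h
  have hdiv := Int.mul_ediv_add_emod (Q + u) q
  have hr₀ : 0 ≤ (Q + u) % q := Int.emod_nonneg _ hq.ne'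
  have hrq : (Q + u) % q < q := Int.emod_lt_of_pos _ hq
  refine ⟨v + a * ((Q + u) / q), Q - (Q + u) % q, by omega, by omega, ?_⟩
  linear_combination huv + a * hdiv

lemma Int.eq_of_mul_sub_mul_eq_one_of_mul_modEq_one {a b n x y : ℤ} (hy : a * y - b * n = 1)
    (hx : a * x ≡ 1 [ZMOD n]) (hx₀ : 0 ≤ x) (hxn : x < n) (hy₀ : 0 ≤ y) (hyn : y < n) :
    x = y := by
  have hdvd : n ∣ x - y := by
    have hxy : x - y = -(y * (1 - a * x)) - n * (b * x) := by linear_combination -x * hy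
    rw [hxy]
    exact dvd_sub (dvd_neg.mpr (hx.dvd.mul_left y)) (dvd_mul_right n _)
  have := Int.eq_zero_of_abs_lt_dvd hdvd (abs_sub_lt_iff.mpr ⟨by omega, by omega⟩)
  omega

namespace FareyConsec

variable {Q a₁ q₁ a₂ q₂ : ℤ}

lemma mul_lt_mul (h : FareyConsec Q a₁ q₁ a₂ q₂) : a₁ * q₂ < a₂ * q₁ := by
  obtain ⟨hq₁, -, hq₂, -, -, -, -, -, -, -, hlt, -⟩ := h
  rw [div_lt_div_iff₀ (by exact_mod_cast hq₁) (by exact_mod_cast hq₂)] at hlt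
  exact_mod_cast hlt

lemma mul_le_mul_of_mul_lt_mul (h : FareyConsec Q a₁ q₁ a₂ q₂) {c d : ℤ} (hd : 0 < d)
    (hdQ : d ≤ Q) (hc : a₁ * d < c * q₁) : a₂ * d ≤ c * q₂ := by
  obtain ⟨hq₁, -, hq₂, -, -, -, -, -, -, -, -, hbet⟩ := h
  have hd' : (0 : ℚ) < d := by exact_mod_cast hd
  have hleft : (a₁ : ℚ) / q₁ < c / d := by
    rw [div_lt_div_iff₀ (by exact_mod_cast hq₁) hd']
    exact_mod_cast hc
  have hright := le_of_not_gt fun hlt => hbet c d hd hdQ ⟨hleft, hlt⟩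
  rw [div_le_div_iff₀ (by exact_mod_cast hq₂) hd'] at hright
  exact_mod_cast hright

theorem mul_sub_mul_eq_one (h : FareyConsec Q a₁ q₁ a₂ q₂) : a₂ * q₁ - a₁ * q₂ = 1 := by
  obtain ⟨hq₁, hq₁Q, hq₂, hq₂Q, -, -, -, -, hg₁, hg₂, -⟩ := id h
  obtain ⟨c, d, hdl, hdQ, hcd⟩ := Int.exists_mul_sub_mul_eq_one_of_gcd_eq_one hq₁ hg₁ Q
  have hE : a₂ * d ≤ c * q₂ := h.mul_le_mul_of_mul_lt_mul (by omega) hdQ (by linarith)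
  have hD : a₁ * q₂ < a₂ * q₁ := h.mul_lt_mul
  set D := a₂ * q₁ - a₁ * q₂
  set E := c * q₂ - a₂ * d
  have hq₂_eq : q₂ = E * q₁ + D * d := by linear_combination -q₂ * hcd
  have ha₂_eq : a₂ = E * a₁ + D * c := by linear_combination -a₂ * hcd
  by_contra hD1
  -- `E ≥ 1` and `D ≥ 2` would give `q₂ ≥ q₁ + 2 d > 2 Q - q₁ ≥ Q`, as `d > Q - q₁`.
  have hE0 : E = 0 := by
    by_contra hE0
    have h₁ : q₁ ≤ E * q₁ := le_mul_of_one_le_left hq₁.le (by omega)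
    have h₂ : 2 * d ≤ D * d := mul_le_mul_of_nonneg_right (by omega) (by omega)
    omega
  have hDgcd : D ∣ (Int.gcd a₂ q₂ : ℤ) :=
    Int.dvd_coe_gcd ⟨c, by rw [ha₂_eq, hE0]; ring⟩ ⟨d, by rw [hq₂_eq, hE0]; ring⟩
  rw [hg₂] at hDgcd
  have := Int.le_of_dvd one_pos hDgcd
  omega

lemma num_lt_num_of_den_le (h : FareyConsec Q a₁ q₁ a₂ q₂) (hq : q₁ ≤ q₂) : a₁ < a₂ := by
  obtain ⟨-, -, hq₂, -, -, -, ha₂, -⟩ := id h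
  exact lt_of_mul_lt_mul_right (h.mul_lt_mul.trans_le (mul_le_mul_of_nonneg_left hq ha₂)) hq₂.le

end FareyConsec

theorem stmt_13_general (Q a₁ q₁ a₂ q₂ a₃ q₃ ab₁ ab₃ : ℤ)
    (hcons : FareyConsec Q a₁ q₁ a₂ q₂)
    (hq : q₁ < q₂) (hnu : (Q + q₁) / q₂ = 2)
    (hq₃ : q₃ = 2 * q₂ - q₁) (ha₃ : a₃ = 2 * a₂ - a₁)
    (hj1 : 1 ≤ ab₃) (hj2 : ab₃ < q₃) (hinv3 : a₃ * ab₃ ≡ 1 [ZMOD q₃]) :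
    ¬(q₁ + a₁ + ab₁ ≤ Q ∧ q₃ + a₃ + ab₃ ≤ Q) := by
  rintro ⟨-, h₃⟩
  obtain ⟨-, -, hq₂, -, -, -, ha₂, -⟩ := id hcons
  have hunimod₃ : a₃ * q₂ - a₂ * q₃ = 1 := by
    rw [ha₃, hq₃]; linear_combination hcons.mul_sub_mul_eq_one
  have hab₃ : ab₃ = q₂ := Int.eq_of_mul_sub_mul_eq_one_of_mul_modEq_one hunimod₃ hinv3
    (by omega) hj2 hq₂.le (by omega)
  have hfloor : Q + q₁ < 3 * q₂ := by
    simpa [hnu] using Int.lt_ediv_add_one_mul_self (Q + q₁) hq₂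
  have ha : a₁ < a₂ := hcons.num_lt_num_of_den_le hq.le
  omega

theorem stmt_13 (Q a₁ q₁ a₂ q₂ a₃ q₃ ab₁ ab₃ : ℤ) (hQ : 3 ≤ Q)
    (hcons : FareyConsec Q a₁ q₁ a₂ q₂)
    (ha₁ : 0 < a₁) (ha₁q : a₁ < q₁) (ha₂ : 0 < a₂) (ha₂q : a₂ < q₂)
    (hq : q₁ < q₂) (hnu : (Q + q₁) / q₂ = 2)
    (hq₃ : q₃ = 2 * q₂ - q₁) (ha₃ : a₃ = 2 * a₂ - a₁)
    (hi1 : 1 ≤ ab₁) (hi2 : ab₁ < q₁) (hinv1 : a₁ * ab₁ ≡ 1 [ZMOD q₁])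
    (hj1 : 1 ≤ ab₃) (hj2 : ab₃ < q₃) (hinv3 : a₃ * ab₃ ≡ 1 [ZMOD q₃]) :
    ¬(q₁ + a₁ + ab₁ ≤ Q ∧ q₃ + a₃ + ab₃ ≤ Q) :=
  stmt_13_general Q a₁ q₁ a₂ q₂ a₃ q₃ ab₁ ab₃ hcons hq hnu hq₃ ha₃ hj1 hj2 hinv3
end
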